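/- Let S = k[x₁,…,xₙ] and let I ⊆ S be a d-lex-plus-powers ideal for a degree sequence d = (d₁,…,dₙ). Then each component Iᵢ ⊆ S̄ = k[x₁,…,x_{n-1}] in the decomposition I = ⊕_i Iᵢ xₙⁱ is a d̄-lex-plus-powers ideal, where d̄ = (d₁,…,d_{n-1}). -/

import Mathlib

open MvPolynomial

/-- total degree of an exponent vector -/
def expDeg {n : ℕ} (m : Fin n →₀ ℕ) : ℕ := m.sum fun _ e => e

/-- `u >_lex v` for the lexicographic order with `x₁ > x₂ > ⋯ > xₙ`
(variables indexed so that `X 0` is the largest). -/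
def LexGT {n : ℕ} (u v : Fin n →₀ ℕ) : Prop :=
  ∃ i : Fin n, v i < u i ∧ ∀ l : Fin n, l < i → u l = v l

/-- A monomial ideal: an ideal generated by monomials. -/
def IsMonomialIdeal {k : Type*} [Field k] {n : ℕ}
    (I : Ideal (MvPolynomial (Fin n) k)) : Prop :=
  ∃ A : Set (Fin n →₀ ℕ), I = Ideal.span ((fun m => (monomial m (1 : k))) '' A)

/-- A lex ideal: a monomial ideal such that in each degree its monomials form an
initial lex segment. -/
def IsLexIdeal {k : Type*} [Field k] {n : ℕ}
    (I : Ideal (MvPolynomial (Fin n) k)) : Prop :=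
  IsMonomialIdeal I ∧
    ∀ u v : Fin n →₀ ℕ, expDeg u = expDeg v → LexGT u v →
      monomial v (1 : k) ∈ I → monomial u (1 : k) ∈ I

/-- An `xₙ`-stable monomial ideal (in `n+1` variables `x₁,…,x_{n+1}`,
with `xₙ` interpreted as the last variable). -/
def IsXnStable {k : Type*} [Field k] {n : ℕ}
    (I : Ideal (MvPolynomial (Fin (n + 1)) k)) : Prop :=
  IsMonomialIdeal I ∧
    ∀ u : Fin (n + 1) →₀ ℕ, monomial u (1 : k) ∈ I → 1 ≤ u (Fin.last n) →
      ∀ i : Fin (n + 1), i < Fin.last n →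
        monomial (u + Finsupp.single i 1 - Finsupp.single (Fin.last n) 1) (1 : k) ∈ I

/-- A degree sequence: entries in `ℕ ∪ {∞}`, at least 1, weakly increasing. -/
def IsDegSeq {n : ℕ} (d : Fin n → ℕ∞) : Prop :=
  (∀ i, 1 ≤ d i) ∧ Monotone d

/-- The ideal `(x₁^{d₁}, …, xₙ^{dₙ})`, where `xᵢ^∞ = 0` (so infinite entries
contribute nothing). -/
noncomputable def powersIdeal {n : ℕ} (k : Type*) [Field k] (d : Fin n → ℕ∞) :
    Ideal (MvPolynomial (Fin n) k) :=
  Ideal.span {f | ∃ (i : Fin n) (e : ℕ), d i = (e : ℕ∞) ∧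
    f = monomial (Finsupp.single i e) (1 : k)}

/-- A `d`-lex-plus-powers ideal. -/
def IsLPP {k : Type*} [Field k] {n : ℕ} (d : Fin n → ℕ∞)
    (I : Ideal (MvPolynomial (Fin n) k)) : Prop :=
  ∃ L, IsLexIdeal L ∧ I = L ⊔ powersIdeal k d

/-- A `d`-stable-plus-powers ideal. -/
def IsSPP {k : Type*} [Field k] {n : ℕ} (d : Fin (n + 1) → ℕ∞)
    (I : Ideal (MvPolynomial (Fin (n + 1)) k)) : Prop :=
  ∃ J, IsXnStable J ∧ I = J ⊔ powersIdeal k d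

/-- Hilbert function of a (homogeneous) ideal: `HF(I; j) = dim_k [I]_j`. -/
noncomputable def hfI {k : Type*} [Field k] {n : ℕ}
    (I : Ideal (MvPolynomial (Fin n) k)) (j : ℕ) : ℕ :=
  Module.finrank k
    ↥(I.restrictScalars k ⊓ homogeneousSubmodule (Fin n) k j)

/-- Hilbert function of the quotient: `HF(S/I; j) = dim_k [S/I]_j`. -/
noncomputable def hfQ {k : Type*} [Field k] {n : ℕ}
    (I : Ideal (MvPolynomial (Fin n) k)) (j : ℕ) : ℕ :=
  Module.finrank k
    (↥(homogeneousSubmodule (Fin n) k j) ⧸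
      Submodule.comap (homogeneousSubmodule (Fin n) k j).subtype (I.restrictScalars k))

/-- An ideal is homogeneous iff it contains all homogeneous components of its
elements. -/
def IsHomogeneousIdeal {k : Type*} [Field k] {n : ℕ}
    (I : Ideal (MvPolynomial (Fin n) k)) : Prop :=
  ∀ f ∈ I, ∀ j : ℕ, homogeneousComponent j f ∈ I

/-- The inclusion `S̄ = k[x₁,…,xₙ] → S = k[x₁,…,x_{n+1}]`. -/
noncomputable def inclHom (k : Type*) [Field k] (n : ℕ) :
    MvPolynomial (Fin n) k →+* MvPolynomial (Fin (n + 1)) k :=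
  (MvPolynomial.rename (Fin.castSucc : Fin n → Fin (n + 1))).toRingHom

/-- The `i`-th slice `Iᵢ ⊆ S̄` in the decomposition `I = ⊕ᵢ Iᵢ xₙⁱ`
of a monomial ideal `I ⊆ S = S̄[xₙ]`, defined as `(I : xₙⁱ) ∩ S̄`. -/
noncomputable def idealSlice {k : Type*} [Field k] {n : ℕ}
    (I : Ideal (MvPolynomial (Fin (n + 1)) k)) (i : ℕ) :
    Ideal (MvPolynomial (Fin n) k) :=
  Ideal.comap (inclHom k n)
    (Submodule.colon I (Ideal.span {(X (Fin.last n) : MvPolynomial (Fin (n + 1)) k) ^ i}))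

/-- The maximal homogeneous ideal `(x₁,…,xₙ)` of a polynomial ring. -/
noncomputable def maxIdeal (k : Type*) [Field k] (n : ℕ) :
    Ideal (MvPolynomial (Fin n) k) :=
  Ideal.span (Set.range (X : Fin n → MvPolynomial (Fin n) k))

/-! For a monomial ideal `I`, a monomial `x^m` lies in the slice `Iᵢ` iff `x^m y^i ∈ I`, where `y`
is the last variable; so slicing commutes with sums of monomial ideals. The slice of a lex ideal is
lex, because appending the exponent `i` of `y` preserves equality of degrees and lex comparisons.
The slice of the powers ideal is the whole ring once `y`'s own power divides `y^i`, and otherwise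
is the powers ideal of the remaining variables. -/

open Finsupp

section MonomialIdeal

variable {σ R : Type*} [CommSemiring R]

theorem support_mul_monomial_one (p : MvPolynomial σ R) (s : σ →₀ ℕ) :
    (p * monomial s (1 : R)).support = p.support.map (addRightEmbedding s) :=
  AddMonoidAlgebra.support_coeff_mul_single p 1 (by simp) s

variable [Nontrivial R]

theorem monomial_mem_span_monomial_iff {A : Set (σ →₀ ℕ)} {u : σ →₀ ℕ} :
    monomial u (1 : R) ∈ Ideal.span ((fun m => monomial m (1 : R)) '' A) ↔ ∃ a ∈ A, a ≤ u := by
  classical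
  simp [mem_ideal_span_monomial_image, support_monomial]

theorem span_monomial_setOf_exists_le (A : Set (σ →₀ ℕ)) :
    Ideal.span ((fun m => monomial m (1 : R)) '' {u | ∃ a ∈ A, a ≤ u}) =
      Ideal.span ((fun m => monomial m (1 : R)) '' A) := by
  refine le_antisymm (Ideal.span_le.mpr ?_) (Ideal.span_mono (Set.image_mono ?_))
  · rintro _ ⟨u, hu, rfl⟩
    exact monomial_mem_span_monomial_iff.mpr hu
  · exact fun a ha => ⟨a, ha, le_rfl⟩

end MonomialIdeal

section Snoc

variable {n : ℕ}

/-- The exponent vector of `x^m · y^i`, `y` being the last variable. -/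
noncomputable def snocExp (m : Fin n →₀ ℕ) (i : ℕ) : Fin (n + 1) →₀ ℕ :=
  m.mapDomain Fin.castSucc + single (Fin.last n) i

@[simp]
theorem snocExp_castSucc (m : Fin n →₀ ℕ) (i : ℕ) (j : Fin n) :
    snocExp m i j.castSucc = m j := by
  simp [snocExp, mapDomain_apply (Fin.castSucc_injective n)]

@[simp]
theorem snocExp_last (m : Fin n →₀ ℕ) (i : ℕ) : snocExp m i (Fin.last n) = i := by
  have : Fin.last n ∉ Set.range (Fin.castSucc : Fin n → Fin (n + 1)) := by
    rintro ⟨j, hj⟩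
    exact (Fin.castSucc_lt_last j).ne hj
  simp [snocExp, mapDomain_of_notMem_range m _ this]

theorem snocExp_mono {m m' : Fin n →₀ ℕ} (h : m ≤ m') (i : ℕ) : snocExp m i ≤ snocExp m' i := by
  intro l
  induction l using Fin.lastCases with
  | last => simp
  | cast j => simpa using h j

theorem expDeg_snocExp (m : Fin n →₀ ℕ) (i : ℕ) : expDeg (snocExp m i) = expDeg m + i := by
  rw [snocExp, expDeg, sum_add_index' (fun _ => rfl) (fun _ _ _ => rfl),
    sum_mapDomain_index (fun _ => rfl) (fun _ _ _ => rfl), sum_single_index rfl]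
  rfl

theorem LexGT.snocExp {u v : Fin n →₀ ℕ} (h : LexGT u v) (i : ℕ) :
    LexGT (snocExp u i) (snocExp v i) := by
  obtain ⟨j, hlt, hagree⟩ := h
  refine ⟨j.castSucc, by simpa using hlt, fun l hl => ?_⟩
  obtain ⟨l', rfl⟩ := Fin.exists_castSucc_eq.mpr (hl.trans (Fin.castSucc_lt_last j)).ne
  simpa using hagree l' (Fin.castSucc_lt_castSucc_iff.mp hl)

theorem single_castSucc_le_snocExp_iff {m : Fin n →₀ ℕ} {i e : ℕ} {j : Fin n} :
    single j.castSucc e ≤ snocExp m i ↔ single j e ≤ m := by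
  simp [single_le_iff]

theorem single_last_le_snocExp_iff {m : Fin n →₀ ℕ} {i e : ℕ} :
    single (Fin.last n) e ≤ snocExp m i ↔ e ≤ i := by
  simp [single_le_iff]

end Snoc

section Slice

variable {k : Type*} [Field k] {n : ℕ}

theorem inclHom_mul_X_last_pow_support (f : MvPolynomial (Fin n) k) (i : ℕ) :
    (inclHom k n f * X (Fin.last n) ^ i).support = f.support.image (snocExp · i) := by
  rw [X_pow_eq_monomial]
  change (rename Fin.castSucc f * _).support = _
  rw [support_mul_monomial_one,
    support_rename_of_injective (Fin.castSucc_injective n), Finset.map_eq_image,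
    Finset.image_image]
  rfl

theorem idealSlice_span_monomial (A : Set (Fin (n + 1) →₀ ℕ)) (i : ℕ) :
    idealSlice (Ideal.span ((fun m => monomial m (1 : k)) '' A)) i =
      Ideal.span ((fun m => monomial m (1 : k)) '' {m | ∃ a ∈ A, a ≤ snocExp m i}) := by
  ext f
  rw [idealSlice, Ideal.mem_comap, Ideal.mem_colon_span_singleton, mem_ideal_span_monomial_image,
    mem_ideal_span_monomial_image, inclHom_mul_X_last_pow_support, Finset.forall_mem_image]
  refine forall₂_congr fun m _ => ⟨fun hm => ⟨m, hm, le_rfl⟩, ?_⟩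
  rintro ⟨t, ⟨a, ha, hat⟩, htm⟩
  exact ⟨a, ha, hat.trans (snocExp_mono htm i)⟩

theorem idealSlice_sup {I J : Ideal (MvPolynomial (Fin (n + 1)) k)}
    (hI : IsMonomialIdeal I) (hJ : IsMonomialIdeal J) (i : ℕ) :
    idealSlice (I ⊔ J) i = idealSlice I i ⊔ idealSlice J i := by
  obtain ⟨A, rfl⟩ := hI
  obtain ⟨B, rfl⟩ := hJ
  simp only [← Ideal.span_union, ← Set.image_union, idealSlice_span_monomial]
  congr 2
  ext m
  simp [or_and_right, exists_or]

theorem isLexIdeal_top : IsLexIdeal (⊤ : Ideal (MvPolynomial (Fin n) k)) :=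
  ⟨⟨Set.univ, (Ideal.eq_top_of_isUnit_mem _
    (Ideal.subset_span (Set.mem_image_of_mem _ (Set.mem_univ 0))) (by simp)).symm⟩,
    fun _ _ _ _ _ => trivial⟩

theorem IsLexIdeal.idealSlice {L : Ideal (MvPolynomial (Fin (n + 1)) k)} (hL : IsLexIdeal L)
    (i : ℕ) : IsLexIdeal (idealSlice L i) := by
  obtain ⟨⟨A, rfl⟩, hlex⟩ := hL
  rw [idealSlice_span_monomial]
  refine ⟨⟨_, rfl⟩, fun u v huv hgt hv => ?_⟩
  rw [monomial_mem_span_monomial_iff] at hv ⊢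
  obtain ⟨t, ⟨a, ha, hat⟩, htv⟩ := hv
  have hvL : monomial (snocExp v i) (1 : k) ∈ Ideal.span ((fun m => monomial m (1 : k)) '' A) :=
    monomial_mem_span_monomial_iff.mpr ⟨a, ha, hat.trans (snocExp_mono htv i)⟩
  have huL := hlex _ _ (by rw [expDeg_snocExp, expDeg_snocExp, huv]) (hgt.snocExp i) hvL
  exact ⟨u, monomial_mem_span_monomial_iff.mp huL, le_rfl⟩

theorem powersIdeal_eq_span_monomial {N : ℕ} (d : Fin N → ℕ∞) :
    powersIdeal k d = Ideal.span ((fun m => monomial m (1 : k)) ''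
      {m | ∃ (j : Fin N) (e : ℕ), d j = (e : ℕ∞) ∧ m = single j e}) := by
  rw [powersIdeal]
  congr 1
  ext f
  simp [eq_comm]

theorem isMonomialIdeal_powersIdeal {N : ℕ} (d : Fin N → ℕ∞) :
    IsMonomialIdeal (powersIdeal k d) :=
  ⟨_, powersIdeal_eq_span_monomial d⟩

theorem idealSlice_powersIdeal_of_le {d : Fin (n + 1) → ℕ∞} {i : ℕ}
    (h : d (Fin.last n) ≤ i) : idealSlice (powersIdeal k d) i = ⊤ := by
  obtain ⟨e, he⟩ := ENat.ne_top_iff_exists.mp (ne_top_of_le_ne_top (ENat.natCast_ne_top i) h)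
  have hei : e ≤ i := by exact_mod_cast he ▸ h
  rw [Ideal.eq_top_iff_one, idealSlice, Ideal.mem_comap, map_one, Ideal.mem_colon_span_singleton,
    one_mul, ← Nat.add_sub_cancel' hei, pow_add]
  refine Ideal.mul_mem_right _ _ (Ideal.subset_span ⟨Fin.last n, e, he.symm, ?_⟩)
  rw [X_pow_eq_monomial]

theorem idealSlice_powersIdeal_of_lt {d : Fin (n + 1) → ℕ∞} {i : ℕ}
    (h : (i : ℕ∞) < d (Fin.last n)) :
    idealSlice (powersIdeal k d) i = powersIdeal k (d ∘ Fin.castSucc) := by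
  rw [powersIdeal_eq_span_monomial, idealSlice_span_monomial, powersIdeal_eq_span_monomial]
  conv_rhs => rw [← span_monomial_setOf_exists_le]
  congr 2
  ext m
  simp only [Set.mem_ofPred_eq, Function.comp_apply]
  constructor
  · rintro ⟨_, ⟨j, e, hde, rfl⟩, hle⟩
    induction j using Fin.lastCases with
    | last =>
      rw [single_last_le_snocExp_iff] at hle
      exact absurd (hde ▸ h) (not_lt.mpr (by exact_mod_cast hle))
    | cast j => exact ⟨_, ⟨j, e, hde, rfl⟩, single_castSucc_le_snocExp_iff.mp hle⟩
  · rintro ⟨_, ⟨j, e, hde, rfl⟩, hle⟩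
    exact ⟨_, ⟨j.castSucc, e, hde, rfl⟩, single_castSucc_le_snocExp_iff.mpr hle⟩

end Slice

theorem isLPP_slice_of_isLPP_general
    {k : Type*} [Field k] {n : ℕ} (d : Fin (n + 1) → ℕ∞)
    (I : Ideal (MvPolynomial (Fin (n + 1)) k)) (hI : IsLPP d I) :
    ∀ i : ℕ, IsLPP (d ∘ Fin.castSucc) (idealSlice I i) := by
  intro i
  obtain ⟨L, hL, rfl⟩ := hI
  rw [idealSlice_sup hL.1 (isMonomialIdeal_powersIdeal d)]
  rcases le_or_gt (d (Fin.last n)) i with h | h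
  · rw [idealSlice_powersIdeal_of_le h, sup_top_eq]
    exact ⟨⊤, isLexIdeal_top, (top_sup_eq _).symm⟩
  · rw [idealSlice_powersIdeal_of_lt h]
    exact ⟨_, hL.idealSlice i, rfl⟩

/-- If `I ⊆ S = k[x₁,…,x_{n+1}]` is a `d`-lex-plus-powers ideal,
then each component `Iᵢ ⊆ S̄ = k[x₁,…,xₙ]` of the decomposition `I = ⊕ᵢ Iᵢ x_{n+1}ⁱ`
is a `d̄`-lex-plus-powers ideal, where `d̄ = (d₁,…,dₙ)`. -/
theorem isLPP_slice_of_isLPP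
    {k : Type*} [Field k] {n : ℕ} (d : Fin (n + 1) → ℕ∞) (hd : IsDegSeq d)
    (I : Ideal (MvPolynomial (Fin (n + 1)) k)) (hI : IsLPP d I) :
    ∀ i : ℕ, IsLPP (d ∘ Fin.castSucc) (idealSlice I i) :=
  isLPP_slice_of_isLPP_general d I hI
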